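/- Let T be a robustness tree over a type X, k > 0 a real, and S ⊆ X. Suppose x' ∈ S and s' ∈ ℝ satisfy s' ≤ 0 and Dec_k(T, x', s'), and (x', s') is optimal for the decomposed problem, i.e. s' ≤ s for every x ∈ S and s ∈ ℝ with s ≤ 0 and Dec_k(T,x,s). Then V̄_k(T,x') = s' and x' is optimal for the original problem: V̄_k(T,x') ≤ 0 and V̄_k(T,x') ≤ V̄_k(T,x) for every x ∈ S with V̄_k(T,x) ≤ 0. -/

import Mathlib

/-! For `k > 0` the smoothed minimum is monotone in both arguments, so by induction on the tree
`Dec k T x s` holds exactly when `sVal k T x ≤ s`: the decomposed problem is the epigraph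
reformulation of the original one, and optimal values and optimizers correspond. -/

/-- The smoothed minimum of two reals (log-sum-exp under-approximation). -/
noncomputable def smin (k a b : ℝ) : ℝ :=
  -(1 / k) * Real.log (Real.exp (-k * a) + Real.exp (-k * b))

/-- A robustness tree: leaves are predicates, `maxN` are conjunction-like nodes,
`minN` are disjunction-like nodes. -/
inductive RTree (X : Type*) where
  | leaf : (X → ℝ) → RTree X
  | maxN : RTree X → RTree X → RTree X
  | minN : RTree X → RTree X → RTree X

/-- The smoothed (reversed) robustness value of a tree. -/
noncomputable def sVal {X : Type*} (k : ℝ) : RTree X → X → ℝ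
  | RTree.leaf g, x => g x
  | RTree.maxN t1 t2, x => max (sVal k t1 x) (sVal k t2 x)
  | RTree.minN t1 t2, x => smin k (sVal k t1 x) (sVal k t2 x)

/-- The decomposed-feasibility predicate of the robustness decomposition. -/
def Dec {X : Type*} (k : ℝ) : RTree X → X → ℝ → Prop
  | RTree.leaf g, x, s => g x ≤ s
  | RTree.maxN t1 t2, x, s => Dec k t1 x s ∧ Dec k t2 x s
  | RTree.minN t1 t2, x, s =>
      ∃ s1 s2 : ℝ, Dec k t1 x s1 ∧ Dec k t2 x s2 ∧ smin k s1 s2 ≤ s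

theorem smin_le_smin {k a b a' b' : ℝ} (hk : 0 < k) (ha : a ≤ a') (hb : b ≤ b') :
    smin k a b ≤ smin k a' b' := by
  have hexp : Real.exp (-k * a') + Real.exp (-k * b') ≤ Real.exp (-k * a) + Real.exp (-k * b) := by
    gcongr Real.exp ?_ + Real.exp ?_ <;> nlinarith
  unfold smin
  rw [neg_mul (1 / k), neg_mul (1 / k), neg_le_neg_iff]
  gcongr

theorem dec_iff_sVal_le {X : Type*} {k : ℝ} (hk : 0 < k) (T : RTree X) (x : X) (s : ℝ) :
    Dec k T x s ↔ sVal k T x ≤ s := by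
  induction T generalizing s with
  | leaf g => rfl
  | maxN t₁ t₂ ih₁ ih₂ => simp only [Dec, sVal, ih₁, ih₂, max_le_iff]
  | minN t₁ t₂ ih₁ ih₂ =>
    simp only [Dec, sVal, ih₁, ih₂]
    constructor
    · rintro ⟨s₁, s₂, h₁, h₂, hs⟩
      exact (smin_le_smin hk h₁ h₂).trans hs
    · intro hs
      exact ⟨_, _, le_rfl, le_rfl, hs⟩

theorem decomposed_optimal_implies_original_optimal {X : Type*} (T : RTree X) (k : ℝ)
    (hk : 0 < k) (S : Set X) (x' : X) (s' : ℝ) (hxS : x' ∈ S) (hs0 : s' ≤ 0)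
    (hdec : Dec k T x' s')
    (hopt : ∀ x ∈ S, ∀ s : ℝ, s ≤ 0 → Dec k T x s → s' ≤ s) :
    sVal k T x' = s' ∧ sVal k T x' ≤ 0 ∧
      ∀ x ∈ S, sVal k T x ≤ 0 → sVal k T x' ≤ sVal k T x := by
  have hval : sVal k T x' ≤ s' := (dec_iff_sVal_le hk T x' s').1 hdec
  have hopt_val : ∀ x ∈ S, sVal k T x ≤ 0 → s' ≤ sVal k T x := fun x hx hx0 =>
    hopt x hx _ hx0 ((dec_iff_sVal_le hk T x _).2 le_rfl)
  exact ⟨le_antisymm hval (hopt_val x' hxS (hval.trans hs0)), hval.trans hs0,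
    fun x hx hx0 => hval.trans (hopt_val x hx hx0)⟩
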